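/- arXiv:2512.21548 — 3 statements merged into one kernel-verified Lean document; each statement's English description precedes it below -/
import Mathlib

section
/- Let \overline{W}_{1d} be the 1D self-similar Burgers profile and define \overline{W}(y_1,y_2) = \langle y_2 \rangle \, \overline{W}_{1d}(\langle y_2 \rangle^{-3} y_1), where \langle y_2 \rangle = (1+y_2^2)^{1/2}. Then \overline{W} is differentiable on \mathbb{R}^2 and satisfies the 2D self-similar Burgers equation -\tfrac{1}{2}\overline{W} + (\tfrac{3}{2} y_1 + \overline{W})\,\partial_{y_1}\overline{W} + \tfrac{1}{2} y_2\, \partial_{y_2}\overline{W} = 0 at every point of \mathbb{R}^2. -/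
open Real

/-- From the cubic equation, `W1d` has a derivative everywhere. -/
lemma W1d_hasDerivAt (W1d : ℝ → ℝ)
    (h : ∀ y : ℝ, (W1d y) ^ 3 + W1d y + y = 0) (a : ℝ) :
    HasDerivAt W1d (-(3 * (W1d a) ^ 2 + 1))⁻¹ a := by
  have hmono : StrictMono (fun w : ℝ => w ^ 3 + w) := by
    intro x y hxy
    have h1 : 0 < y - x := by linarith
    have h2 : 0 ≤ x ^ 2 + x * y + y ^ 2 := by nlinarith [sq_nonneg (x + y), sq_nonneg x, sq_nonneg y]
    show x ^ 3 + x < y ^ 3 + y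
    nlinarith
  have key : ∀ y : ℝ, (W1d y) ^ 3 + W1d y = -y := fun y => by linarith [h y]
  have hanti : StrictAnti W1d := by
    intro x y hxy
    have : (W1d y) ^ 3 + W1d y < (W1d x) ^ 3 + W1d x := by
      rw [key, key]; linarith
    exact (hmono.lt_iff_lt).mp this
  have hsurj : Function.Surjective W1d := by
    intro w
    refine ⟨-(w ^ 3 + w), hmono.injective ?_⟩
    show (W1d (-(w ^ 3 + w))) ^ 3 + W1d (-(w ^ 3 + w)) = w ^ 3 + w
    rw [key]; ring
  -- continuity of W1d
  have hcont : Continuous W1d := by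
    have hV : StrictMono (fun y : ℝ => W1d (-y)) := fun x y hxy =>
      hanti (neg_lt_neg hxy)
    have hVs : Function.Surjective (fun y : ℝ => W1d (-y)) := by
      intro w
      obtain ⟨y, hy⟩ := hsurj w
      exact ⟨-y, by simpa using hy⟩
    have := (StrictMono.orderIsoOfSurjective _ hV hVs).continuous
    have h2 : Continuous (fun y : ℝ => W1d (-y)) := by
      simpa [StrictMono.coe_orderIsoOfSurjective] using this
    have h3 := h2.comp continuous_neg
    convert h3 using 1
    funext y; simp
  set w := W1d a with hw
  have hf : HasDerivAt (fun x : ℝ => -(x ^ 3 + x)) (-(3 * w ^ 2 + 1)) w := by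
    have := ((hasDerivAt_pow 3 w).add (hasDerivAt_id' w)).neg
    exact this.congr_deriv (by norm_num)
  have hne : (-(3 * w ^ 2 + 1) : ℝ) ≠ 0 := by nlinarith [sq_nonneg w]
  have hfg : ∀ᶠ y in nhds a, -(((W1d y) ^ 3) + W1d y) = y :=
    Filter.Eventually.of_forall fun y => by rw [key]; ring
  exact HasDerivAt.of_local_left_inverse hcont.continuousAt hf hne hfg

/-- The 2D profile `W̄(y₁,y₂) = ⟨y₂⟩ · W1d(⟨y₂⟩⁻³ y₁)`, built from the 1D
self-similar Burgers profile, is differentiable on `ℝ²` and satisfies the 2D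
self-similar Burgers equation. -/
theorem burgers_profile_2d (W1d : ℝ → ℝ)
    (h : ∀ y : ℝ, (W1d y) ^ 3 + W1d y + y = 0) :
    let Wbar : ℝ × ℝ → ℝ := fun p =>
      Real.sqrt (1 + p.2 ^ 2) * W1d (p.1 / (Real.sqrt (1 + p.2 ^ 2)) ^ 3)
    Differentiable ℝ Wbar ∧
    ∀ p : ℝ × ℝ,
      -(1/2) * Wbar p + ((3/2) * p.1 + Wbar p) * fderiv ℝ Wbar p (1, 0)
        + (1/2) * p.2 * fderiv ℝ Wbar p (0, 1) = 0 := by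
  intro Wbar
  have hWbar_eq : Wbar = fun p : ℝ × ℝ =>
      Real.sqrt (1 + p.2 ^ 2) * W1d (p.1 * ((Real.sqrt (1 + p.2 ^ 2)) ^ 3)⁻¹) := by
    funext p; simp [Wbar, div_eq_mul_inv]
  -- per-point derivative
  have hmain : ∀ p : ℝ × ℝ,
      HasFDerivAt Wbar
        ((Real.sqrt (1 + p.2 ^ 2)) •
            ((-(3 * (W1d (p.1 * ((Real.sqrt (1 + p.2 ^ 2)) ^ 3)⁻¹)) ^ 2 + 1))⁻¹ •
              (p.1 • ((-3 * p.2 / (Real.sqrt (1 + p.2 ^ 2)) ^ 5) •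
                  ContinuousLinearMap.snd ℝ ℝ ℝ)
                + ((Real.sqrt (1 + p.2 ^ 2)) ^ 3)⁻¹ • ContinuousLinearMap.fst ℝ ℝ ℝ))
          + (W1d (p.1 * ((Real.sqrt (1 + p.2 ^ 2)) ^ 3)⁻¹)) •
            ((p.2 / Real.sqrt (1 + p.2 ^ 2)) • ContinuousLinearMap.snd ℝ ℝ ℝ)) p := by
    intro p
    set t := p.2 with ht
    set s := Real.sqrt (1 + t ^ 2) with hsdef
    have hpos : (0:ℝ) < 1 + t ^ 2 := by positivity
    have hs : 0 < s := Real.sqrt_pos.mpr hpos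
    have hs2 : s ^ 2 = 1 + t ^ 2 := Real.sq_sqrt hpos.le
    have hsd : HasDerivAt (fun x : ℝ => Real.sqrt (1 + x ^ 2)) (t / s) t := by
      have h1 : HasDerivAt (fun x : ℝ => 1 + x ^ 2) (2 * t) t := by
        simpa using (hasDerivAt_pow 2 t).const_add 1
      have h2 := (Real.hasDerivAt_sqrt hpos.ne').comp t h1
      refine h2.congr_deriv ?_
      field_simp
      ring
    have hg : HasDerivAt (fun x : ℝ => ((Real.sqrt (1 + x ^ 2)) ^ 3)⁻¹)
        (-3 * t / s ^ 5) t := by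
      have h3 := (hsd.pow 3).inv (pow_ne_zero 3 hs.ne')
      refine h3.congr_deriv ?_
      simp only [Pi.pow_apply]
      rw [← hsdef]
      field_simp
      ring
    have hS : HasFDerivAt (fun p : ℝ × ℝ => Real.sqrt (1 + p.2 ^ 2))
        ((t / s) • ContinuousLinearMap.snd ℝ ℝ ℝ) p :=
      by have := hsd.comp_hasFDerivAt p (hasFDerivAt_snd (𝕜 := ℝ) (p := p)); exact this
    have hG : HasFDerivAt (fun p : ℝ × ℝ => ((Real.sqrt (1 + p.2 ^ 2)) ^ 3)⁻¹)
        ((-3 * t / s ^ 5) • ContinuousLinearMap.snd ℝ ℝ ℝ) p :=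
      by have := hg.comp_hasFDerivAt p (hasFDerivAt_snd (𝕜 := ℝ) (p := p)); exact this
    have hu : HasFDerivAt (fun p : ℝ × ℝ => p.1 * ((Real.sqrt (1 + p.2 ^ 2)) ^ 3)⁻¹)
        (p.1 • ((-3 * t / s ^ 5) • ContinuousLinearMap.snd ℝ ℝ ℝ)
          + (s ^ 3)⁻¹ • ContinuousLinearMap.fst ℝ ℝ ℝ) p := by
      have := (hasFDerivAt_fst (𝕜 := ℝ) (p := p)).mul hG
      refine this.congr_fderiv ?_
      simp [hsdef, ← ht]
    have hW := W1d_hasDerivAt W1d h (p.1 * ((Real.sqrt (1 + p.2 ^ 2)) ^ 3)⁻¹)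
    have hWu := hW.comp_hasFDerivAt p hu
    have hfinal := hS.mul hWu
    rw [hWbar_eq]
    exact hfinal
  constructor
  · rw [hWbar_eq] at hmain ⊢
    exact fun p => (hmain p).differentiableAt
  · intro p
    have hd := (hmain p).fderiv
    rw [hd]
    simp only [ContinuousLinearMap.add_apply, ContinuousLinearMap.smul_apply,
      ContinuousLinearMap.coe_fst', ContinuousLinearMap.coe_snd', smul_eq_mul]
    show -(1/2) * (Real.sqrt (1 + p.2 ^ 2) * W1d (p.1 / (Real.sqrt (1 + p.2 ^ 2)) ^ 3)) + _ + _ = 0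
    rw [div_eq_mul_inv]
    set t := p.2 with ht
    set s := Real.sqrt (1 + t ^ 2) with hsdef
    have hpos : (0:ℝ) < 1 + t ^ 2 := by positivity
    have hs : 0 < s := Real.sqrt_pos.mpr hpos
    have hs2 : s ^ 2 = 1 + t ^ 2 := Real.sq_sqrt hpos.le
    set u := p.1 * (s ^ 3)⁻¹ with hu
    set W := W1d u with hW
    have hc : W ^ 3 + W + u = 0 := h u
    have hp1 : p.1 = u * s ^ 3 := by
      rw [hu]; field_simp
    have hWp : Wbar p = s * W := by rw [hWbar_eq]
    rw [hWp, hp1]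
    have hne : (3 * W ^ 2 + 1 : ℝ) ≠ 0 := by positivity
    have hne2 : ((-1 : ℝ) + -(3 * W ^ 2)) ≠ 0 := by nlinarith [sq_nonneg W]
    field_simp [hs.ne']
    rw [← hW]
    linear_combination (-3 * s) * hc - (3 * s * u + s * W * (3 * W ^ 2 + 1)) * hs2
end

section
/- For all real numbers a \le b, \int_a^b (1+z^2)^{-1/3}\,dz \le 6\,(b-a)^{1/3}. -/
open Real intervalIntegral

/-- cube of a one-third rpow -/
lemma cube_rpow_third {x : ℝ} (hx : 0 ≤ x) : (x ^ ((1:ℝ)/3)) ^ (3:ℕ) = x := by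
  rw [← Real.rpow_natCast (x ^ ((1:ℝ)/3)) 3, ← Real.rpow_mul hx]
  norm_num

lemma le_rpow_third_of_cube_le {A B : ℝ} (hA : 0 ≤ A) (h : A ^ (3:ℕ) ≤ B) :
    A ≤ B ^ ((1:ℝ)/3) := by
  have hB : (0:ℝ) ≤ A ^ (3:ℕ) := pow_nonneg hA 3
  calc A = (A ^ (3:ℕ)) ^ ((1:ℝ)/3) := by
        rw [← Real.rpow_natCast A 3, ← Real.rpow_mul hA]; norm_num
    _ ≤ B ^ ((1:ℝ)/3) := Real.rpow_le_rpow hB h (by norm_num)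

lemma rpow_third_nonneg {x : ℝ} (hx : 0 ≤ x) : 0 ≤ x ^ ((1:ℝ)/3) := Real.rpow_nonneg hx _

/-- subadditivity-type bound -/
lemma sub_rpow_third_le {c d : ℝ} (hc : 0 ≤ c) (hcd : c ≤ d) :
    (1 + d) ^ ((1:ℝ)/3) - (1 + c) ^ ((1:ℝ)/3) ≤ (d - c) ^ ((1:ℝ)/3) := by
  set u := (1 + c) ^ ((1:ℝ)/3) with hu
  set v := (1 + d) ^ ((1:ℝ)/3) with hv
  have h1c : (0:ℝ) ≤ 1 + c := by linarith
  have h1d : (0:ℝ) ≤ 1 + d := by linarith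
  have hu3 : u ^ (3:ℕ) = 1 + c := cube_rpow_third h1c
  have hv3 : v ^ (3:ℕ) = 1 + d := cube_rpow_third h1d
  have hun : 0 ≤ u := rpow_third_nonneg h1c
  have huv : u ≤ v := Real.rpow_le_rpow h1c (by linarith) (by norm_num)
  apply le_rpow_third_of_cube_le (by linarith)
  have : (v - u) ^ (3:ℕ) ≤ v ^ (3:ℕ) - u ^ (3:ℕ) := by nlinarith [mul_nonneg hun (sub_nonneg.2 huv), mul_nonneg (mul_nonneg hun (sub_nonneg.2 huv)) (sub_nonneg.2 huv)]
  rw [hu3, hv3] at this; linarith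

/-- two-variable concavity bound -/
lemma twovar_bound {x y : ℝ} (hx : 0 ≤ x) (hy : 0 ≤ y) :
    3 * 2 ^ ((1:ℝ)/3) * (x ^ ((1:ℝ)/3) + y ^ ((1:ℝ)/3)) ≤ 6 * (x + y) ^ ((1:ℝ)/3) := by
  set u := x ^ ((1:ℝ)/3)
  set v := y ^ ((1:ℝ)/3)
  have hu : 0 ≤ u := rpow_third_nonneg hx
  have hv : 0 ≤ v := rpow_third_nonneg hy
  have hu3 : u ^ (3:ℕ) = x := cube_rpow_third hx
  have hv3 : v ^ (3:ℕ) = y := cube_rpow_third hy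
  have h2 : (0:ℝ) ≤ 2 ^ ((1:ℝ)/3) := by positivity
  have key : 2 ^ ((1:ℝ)/3) * (u + v) / 2 ≤ (x + y) ^ ((1:ℝ)/3) := by
    apply le_rpow_third_of_cube_le (by positivity)
    have h23 : (2 ^ ((1:ℝ)/3) : ℝ) ^ (3:ℕ) = 2 := cube_rpow_third (by norm_num)
    have expand : (2 ^ ((1:ℝ)/3) * (u + v) / 2) ^ (3:ℕ)
        = (2 ^ ((1:ℝ)/3)) ^ (3:ℕ) * (u + v) ^ (3:ℕ) / 8 := by ring
    rw [expand, h23, ← hu3, ← hv3]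
    nlinarith [sq_nonneg (u - v), mul_nonneg (mul_nonneg hu hv) (add_nonneg hu hv)]
  linarith

lemma integrand_cont : Continuous (fun z : ℝ => (1 + z ^ 2) ^ (-(1:ℝ)/3)) := by
  apply Continuous.rpow_const (by continuity)
  intro x; left; positivity

/-- pointwise bound on the right half line -/
lemma pointwise_bound {z : ℝ} (hz : 0 ≤ z) :
    (1 + z ^ 2) ^ (-(1:ℝ)/3) ≤ 2 ^ ((1:ℝ)/3) * (1 + z) ^ (-(2:ℝ)/3) := by
  have h1z : (0:ℝ) < 1 + z := by linarith
  have h1z2 : (0:ℝ) < 1 + z ^ 2 := by positivity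
  have key : (1 + z) ^ ((2:ℝ)/3) ≤ 2 ^ ((1:ℝ)/3) * (1 + z ^ 2) ^ ((1:ℝ)/3) := by
    have h1 : (1 + z) ^ ((2:ℝ)/3) = ((1 + z) ^ (2:ℕ)) ^ ((1:ℝ)/3) := by
      rw [← Real.rpow_natCast (1 + z) 2, ← Real.rpow_mul h1z.le]; norm_num
    have h2 : (2:ℝ) ^ ((1:ℝ)/3) * (1 + z ^ 2) ^ ((1:ℝ)/3)
        = (2 * (1 + z ^ 2)) ^ ((1:ℝ)/3) := (Real.mul_rpow (by norm_num) h1z2.le).symm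
    rw [h1, h2]
    apply Real.rpow_le_rpow (by positivity) (by nlinarith [sq_nonneg (z - 1)]) (by norm_num)
  have e1 : (1 + z ^ 2) ^ (-(1:ℝ)/3) = ((1 + z ^ 2) ^ ((1:ℝ)/3))⁻¹ := by
    rw [← Real.rpow_neg h1z2.le]; norm_num
  have e2 : (1 + z) ^ (-(2:ℝ)/3) = ((1 + z) ^ ((2:ℝ)/3))⁻¹ := by
    rw [← Real.rpow_neg h1z.le]; norm_num
  rw [e1, e2]
  have hY : (0:ℝ) < (1 + z) ^ ((2:ℝ)/3) := Real.rpow_pos_of_pos h1z _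
  have hX : (0:ℝ) < (1 + z ^ 2) ^ ((1:ℝ)/3) := Real.rpow_pos_of_pos h1z2 _
  have hc : (0:ℝ) < 2 ^ ((1:ℝ)/3) := Real.rpow_pos_of_pos (by norm_num) _
  have hr : 2 ^ ((1:ℝ)/3) * ((1 + z) ^ ((2:ℝ)/3))⁻¹
      = ((1 + z) ^ ((2:ℝ)/3) / 2 ^ ((1:ℝ)/3))⁻¹ := by
    rw [inv_div]; ring
  rw [hr]
  apply inv_anti₀ (div_pos hY hc)
  rw [div_le_iff₀ hc]
  linarith [key]

/-- main estimate on the right half line -/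
lemma half_line_bound {c d : ℝ} (hc : 0 ≤ c) (hcd : c ≤ d) :
    (∫ z in c..d, (1 + z ^ 2) ^ (-(1:ℝ)/3))
      ≤ 3 * 2 ^ ((1:ℝ)/3) * ((1 + d) ^ ((1:ℝ)/3) - (1 + c) ^ ((1:ℝ)/3)) := by
  have hicc : Set.uIcc c d = Set.Icc c d := Set.uIcc_of_le hcd
  have hpos : ∀ z ∈ Set.Icc c d, (0:ℝ) < 1 + z := fun z hz => by
    have := hz.1; linarith
  have hderiv : ∀ z ∈ Set.uIcc c d,
      HasDerivAt (fun z : ℝ => 3 * 2 ^ ((1:ℝ)/3) * (1 + z) ^ ((1:ℝ)/3))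
        (2 ^ ((1:ℝ)/3) * (1 + z) ^ (-(2:ℝ)/3)) z := by
    intro z hz
    rw [hicc] at hz
    have h1z := hpos z hz
    have h : HasDerivAt (fun z : ℝ => 1 + z) 1 z := (hasDerivAt_id z).const_add 1
    have h2 := (h.rpow_const (p := (1:ℝ)/3) (Or.inl h1z.ne'))
    have h3 := h2.const_mul (3 * 2 ^ ((1:ℝ)/3))
    refine h3.congr_deriv ?_
    rw [show (1:ℝ)/3 - 1 = -(2:ℝ)/3 by norm_num]
    ring
  have hcont : ContinuousOn (fun z : ℝ => 2 ^ ((1:ℝ)/3) * (1 + z) ^ (-(2:ℝ)/3))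
      (Set.uIcc c d) := by
    rw [hicc]
    apply ContinuousOn.mul continuousOn_const
    apply ContinuousOn.rpow_const (by fun_prop)
    intro z hz; exact Or.inl (hpos z hz).ne'
  have hint : IntervalIntegrable (fun z : ℝ => 2 ^ ((1:ℝ)/3) * (1 + z) ^ (-(2:ℝ)/3))
      MeasureTheory.volume c d := hcont.intervalIntegrable
  have heq := intervalIntegral.integral_eq_sub_of_hasDerivAt hderiv hint
  have hmono : (∫ z in c..d, (1 + z ^ 2) ^ (-(1:ℝ)/3))
      ≤ ∫ z in c..d, 2 ^ ((1:ℝ)/3) * (1 + z) ^ (-(2:ℝ)/3) := by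
    apply intervalIntegral.integral_mono_on hcd
      (integrand_cont.intervalIntegrable c d) hint
    intro z hz
    exact pointwise_bound (le_trans hc hz.1)
  calc (∫ z in c..d, (1 + z ^ 2) ^ (-(1:ℝ)/3))
      ≤ ∫ z in c..d, 2 ^ ((1:ℝ)/3) * (1 + z) ^ (-(2:ℝ)/3) := hmono
    _ = 3 * 2 ^ ((1:ℝ)/3) * (1 + d) ^ ((1:ℝ)/3)
        - 3 * 2 ^ ((1:ℝ)/3) * (1 + c) ^ ((1:ℝ)/3) := heq
    _ = 3 * 2 ^ ((1:ℝ)/3) * ((1 + d) ^ ((1:ℝ)/3) - (1 + c) ^ ((1:ℝ)/3)) := by ring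

/-- reflection -/
lemma reflect_integral (c d : ℝ) :
    (∫ z in c..d, (1 + z ^ 2) ^ (-(1:ℝ)/3))
      = ∫ z in (-d)..(-c), (1 + z ^ 2) ^ (-(1:ℝ)/3) := by
  have := intervalIntegral.integral_comp_neg (a := -d) (b := -c)
    (f := fun z : ℝ => (1 + z ^ 2) ^ (-(1:ℝ)/3))
  simp only [neg_neg] at this
  rw [← this]
  congr 1
  ext z
  ring_nf

lemma two_third_le : (2:ℝ) ^ ((1:ℝ)/3) ≤ 2 := by
  calc (2:ℝ) ^ ((1:ℝ)/3) ≤ 2 ^ (1:ℝ) :=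
        Real.rpow_le_rpow_of_exponent_le (by norm_num) (by norm_num)
    _ = 2 := Real.rpow_one 2

/-- Integral inequality yielding the uniform `C^{1/3}` Hölder bound. -/
theorem holder_integral_bound (a b : ℝ) (hab : a ≤ b) :
    (∫ z in a..b, (1 + z ^ 2) ^ (-(1 : ℝ)/3)) ≤ 6 * (b - a) ^ ((1 : ℝ)/3) := by
  have h2 : (0:ℝ) ≤ 2 ^ ((1:ℝ)/3) := by positivity
  have hba : 0 ≤ (b - a) ^ ((1:ℝ)/3) := rpow_third_nonneg (by linarith)
  rcases le_or_gt 0 a with ha | ha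
  · -- both nonneg
    calc (∫ z in a..b, (1 + z ^ 2) ^ (-(1:ℝ)/3))
        ≤ 3 * 2 ^ ((1:ℝ)/3) * ((1 + b) ^ ((1:ℝ)/3) - (1 + a) ^ ((1:ℝ)/3)) :=
          half_line_bound ha hab
      _ ≤ 3 * 2 ^ ((1:ℝ)/3) * (b - a) ^ ((1:ℝ)/3) := by
          apply mul_le_mul_of_nonneg_left (sub_rpow_third_le ha hab) (by positivity)
      _ ≤ 6 * (b - a) ^ ((1:ℝ)/3) := by nlinarith [two_third_le]
  rcases le_or_gt b 0 with hb | hb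
  · -- both nonpos: reflect
    rw [reflect_integral]
    have h1 : (0:ℝ) ≤ -b := by linarith
    have h2' : -b ≤ -a := by linarith
    calc (∫ z in (-b)..(-a), (1 + z ^ 2) ^ (-(1:ℝ)/3))
        ≤ 3 * 2 ^ ((1:ℝ)/3) * ((1 + -a) ^ ((1:ℝ)/3) - (1 + -b) ^ ((1:ℝ)/3)) :=
          half_line_bound h1 h2'
      _ ≤ 3 * 2 ^ ((1:ℝ)/3) * (-a - -b) ^ ((1:ℝ)/3) := by
          apply mul_le_mul_of_nonneg_left (sub_rpow_third_le h1 h2') (by positivity)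
      _ = 3 * 2 ^ ((1:ℝ)/3) * (b - a) ^ ((1:ℝ)/3) := by ring_nf
      _ ≤ 6 * (b - a) ^ ((1:ℝ)/3) := by nlinarith [two_third_le]
  · -- a < 0 < b
    have hsplit : (∫ z in a..b, (1 + z ^ 2) ^ (-(1:ℝ)/3))
        = (∫ z in a..(0:ℝ), (1 + z ^ 2) ^ (-(1:ℝ)/3))
          + ∫ z in (0:ℝ)..b, (1 + z ^ 2) ^ (-(1:ℝ)/3) :=
      (intervalIntegral.integral_add_adjacent_intervals
        (integrand_cont.intervalIntegrable a 0)
        (integrand_cont.intervalIntegrable 0 b)).symm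
    have hL : (∫ z in a..(0:ℝ), (1 + z ^ 2) ^ (-(1:ℝ)/3))
        ≤ 3 * 2 ^ ((1:ℝ)/3) * (-a) ^ ((1:ℝ)/3) := by
      rw [reflect_integral]
      rw [neg_zero]
      have h1 : (0:ℝ) ≤ -a := by linarith
      calc (∫ z in (0:ℝ)..(-a), (1 + z ^ 2) ^ (-(1:ℝ)/3))
          ≤ 3 * 2 ^ ((1:ℝ)/3) * ((1 + -a) ^ ((1:ℝ)/3) - (1 + 0) ^ ((1:ℝ)/3)) :=
            half_line_bound le_rfl h1
        _ ≤ 3 * 2 ^ ((1:ℝ)/3) * (-a - 0) ^ ((1:ℝ)/3) := by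
            apply mul_le_mul_of_nonneg_left (sub_rpow_third_le le_rfl h1) (by positivity)
        _ = 3 * 2 ^ ((1:ℝ)/3) * (-a) ^ ((1:ℝ)/3) := by norm_num
    have hR : (∫ z in (0:ℝ)..b, (1 + z ^ 2) ^ (-(1:ℝ)/3))
        ≤ 3 * 2 ^ ((1:ℝ)/3) * b ^ ((1:ℝ)/3) := by
      calc (∫ z in (0:ℝ)..b, (1 + z ^ 2) ^ (-(1:ℝ)/3))
          ≤ 3 * 2 ^ ((1:ℝ)/3) * ((1 + b) ^ ((1:ℝ)/3) - (1 + 0) ^ ((1:ℝ)/3)) :=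
            half_line_bound le_rfl hb.le
        _ ≤ 3 * 2 ^ ((1:ℝ)/3) * (b - 0) ^ ((1:ℝ)/3) := by
            apply mul_le_mul_of_nonneg_left (sub_rpow_third_le le_rfl hb.le) (by positivity)
        _ = 3 * 2 ^ ((1:ℝ)/3) * b ^ ((1:ℝ)/3) := by norm_num
    have hcomb := twovar_bound (x := -a) (y := b) (by linarith) hb.le
    rw [hsplit]
    have : -a + b = b - a := by ring
    rw [this] at hcomb
    linarith
end

section
/- Let W(y) denote the unique real solution of W^3 + W + y = 0. Then for all real y, 6|W(y)|/(1+3W(y)^2)^3 \le (1+y^2)^{-5/6}. Equivalently, the 1D self-similar Burgers profile \overline{W}_{1d} satisfies |\overline{W}_{1d}''(y)| \le \langle y\rangle^{-5/3} with \langle y\rangle = (1+y^2)^{1/2}. -/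
lemma burgers_key (t : ℝ) (ht : 0 ≤ t) :
    46656 * t ^ 3 * (1 + t + 2 * t ^ 2 + t ^ 3) ^ 5 ≤ (1 + 3 * t) ^ 18 := by
  nlinarith [mul_nonneg ht (sq_nonneg (2 - 291 * t ^ 2)), sq_nonneg (4 * t - 13 * t ^ 2),
    pow_nonneg ht 2, pow_nonneg ht 3, pow_nonneg ht 4, pow_nonneg ht 5, pow_nonneg ht 6,
    pow_nonneg ht 7, pow_nonneg ht 8, pow_nonneg ht 9, pow_nonneg ht 10, pow_nonneg ht 11,
    pow_nonneg ht 12, pow_nonneg ht 13, pow_nonneg ht 14, pow_nonneg ht 15, pow_nonneg ht 16,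
    pow_nonneg ht 17, pow_nonneg ht 18]

/-- Second-derivative bound for the 1D self-similar Burgers profile:
`6|W|/(1+3W²)³ ≤ (1+y²)^{-5/6}` where `W` is the unique real root of `W³+W+y=0`. -/
theorem burgers_profile_second_deriv_bound (y W : ℝ) (h : W ^ 3 + W + y = 0) :
    6 * |W| / (1 + 3 * W ^ 2) ^ 3 ≤ (1 + y ^ 2) ^ (-(5 : ℝ)/6) := by
  have ht : (0:ℝ) ≤ W ^ 2 := sq_nonneg W
  have hy2 : 1 + y ^ 2 = 1 + W ^ 2 + 2 * (W ^ 2) ^ 2 + (W ^ 2) ^ 3 := by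
    have hy : y = -(W ^ 3 + W) := by linarith
    rw [hy]; ring
  have h1 : (0:ℝ) < 1 + y ^ 2 := by positivity
  have hA : (0:ℝ) < (1 + 3 * W ^ 2) ^ 3 := by positivity
  have hB : (0:ℝ) < (1 + y ^ 2) ^ ((5:ℝ)/6) := Real.rpow_pos_of_pos h1 _
  have hB6 : ((1 + y ^ 2) ^ ((5:ℝ)/6)) ^ (6:ℕ) = (1 + y ^ 2) ^ 5 := by
    rw [← Real.rpow_natCast ((1 + y ^ 2) ^ ((5:ℝ)/6)) 6, ← Real.rpow_mul h1.le,
      show ((5:ℝ)/6) * ((6:ℕ):ℝ) = ((5:ℕ):ℝ) by norm_num, Real.rpow_natCast]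
  have key : 6 * |W| * ((1 + y ^ 2) ^ ((5:ℝ)/6)) ≤ (1 + 3 * W ^ 2) ^ 3 := by
    apply le_of_pow_le_pow_left₀ (n := 6) (by norm_num) hA.le
    have habs : |W| ^ 6 = (W ^ 2) ^ 3 := by
      rw [show (6:ℕ) = 2 * 3 by norm_num, pow_mul, sq_abs]
    calc (6 * |W| * ((1 + y ^ 2) ^ ((5:ℝ)/6))) ^ 6
        = 46656 * (|W| ^ 6) * (((1 + y ^ 2) ^ ((5:ℝ)/6)) ^ (6:ℕ)) := by ring
      _ = 46656 * (W ^ 2) ^ 3 * (1 + y ^ 2) ^ 5 := by rw [habs, hB6]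
      _ = 46656 * (W ^ 2) ^ 3 * (1 + W ^ 2 + 2 * (W ^ 2) ^ 2 + (W ^ 2) ^ 3) ^ 5 := by
          rw [hy2]
      _ ≤ (1 + 3 * W ^ 2) ^ 18 := burgers_key (W ^ 2) ht
      _ = ((1 + 3 * W ^ 2) ^ 3) ^ 6 := by ring
  rw [show (-(5:ℝ)/6) = -((5:ℝ)/6) by norm_num, Real.rpow_neg h1.le,
    div_le_iff₀ hA, ← div_eq_inv_mul, le_div_iff₀ hB]
  exact key
end
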